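/- Let Λ be a row-finite k-graph with no sources and T a maximal tail of Λ. Then there exists an infinite path x in the subgraph ΛT (paths with source and range in T) that is cofinal in T: for every v ∈ T there exists n ∈ ℕ^k with vΛx(n) ≠ ∅. -/

import Mathlib

/-- A `P`-graph structure on a set `V` of vertices (objects) and a set `E` of paths
(morphisms): a small category with range `r`, source `s`, identities `vert`,
a (partially meaningful) composition `comp`, together with a degree functor `d : E → P`
satisfying the unique factorisation property. -/
structure PGraphStr (P : Type) [AddCommMonoid P] (V : Type) (E : Type) where
  r : E → V
  s : E → V
  d : E → P
  vert : V → E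
  comp : E → E → E
  r_vert : ∀ v, r (vert v) = v
  s_vert : ∀ v, s (vert v) = v
  d_vert : ∀ v, d (vert v) = 0
  r_comp : ∀ μ ν, s μ = r ν → r (comp μ ν) = r μ
  s_comp : ∀ μ ν, s μ = r ν → s (comp μ ν) = s ν
  d_comp : ∀ μ ν, s μ = r ν → d (comp μ ν) = d μ + d ν
  comp_assoc : ∀ μ ν ξ, s μ = r ν → s ν = r ξ →
    comp (comp μ ν) ξ = comp μ (comp ν ξ)
  vert_comp : ∀ μ, comp (vert (r μ)) μ = μ
  comp_vert : ∀ μ, comp μ (vert (s μ)) = μ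
  factor : ∀ ξ p q, d ξ = p + q →
    ∃! ηζ : E × E, s ηζ.1 = r ηζ.2 ∧ d ηζ.1 = p ∧ d ηζ.2 = q ∧ comp ηζ.1 ηζ.2 = ξ

variable {k : ℕ} {V E : Type}

/-- A `k`-graph (an `ℕ^k`-graph) is row-finite with no sources when
`0 < |vΛ^n| < ∞` for every vertex `v` and degree `n`. -/
def RowFiniteNoSources (Λ : PGraphStr (Fin k → ℕ) V E) : Prop :=
  ∀ (v : V) (n : Fin k → ℕ),
    {e : E | Λ.r e = v ∧ Λ.d e = n}.Finite ∧ {e : E | Λ.r e = v ∧ Λ.d e = n}.Nonempty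

/-- An infinite path in a `k`-graph `Λ`: a degree-preserving functor `Ω_{ℕ^k} → Λ`,
recorded by its segments `x(m,n)` for `m ≤ n`. -/
structure InfPath (Λ : PGraphStr (Fin k → ℕ) V E) where
  seg : ∀ m n : Fin k → ℕ, m ≤ n → E
  d_seg : ∀ m n (h : m ≤ n), Λ.d (seg m n h) = n - m
  src : ∀ m n p (h₁ : m ≤ n) (h₂ : n ≤ p), Λ.s (seg m n h₁) = Λ.r (seg n p h₂)
  seg_self : ∀ m, seg m m le_rfl = Λ.vert (Λ.r (seg m m le_rfl))
  comp_seg : ∀ m n p (h₁ : m ≤ n) (h₂ : n ≤ p),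
    Λ.comp (seg m n h₁) (seg n p h₂) = seg m p (h₁.trans h₂)

/-- The range `x(0)` of an infinite path. -/
def InfPath.range {Λ : PGraphStr (Fin k → ℕ) V E} (x : InfPath Λ) : V :=
  Λ.r (x.seg 0 0 le_rfl)

/-- The shift `σ^p(x)`, with `σ^p(x)(m,n) = x(m+p,n+p)`. -/
def InfPath.shift {Λ : PGraphStr (Fin k → ℕ) V E} (p : Fin k → ℕ) (x : InfPath Λ) :
    InfPath Λ where
  seg m n h := x.seg (m + p) (n + p) (add_le_add h le_rfl)
  d_seg m n h := by
    rw [x.d_seg]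
    funext i
    simp [Nat.add_sub_add_right]
  src m n q h₁ h₂ := x.src _ _ _ _ _
  seg_self m := x.seg_self (m + p)
  comp_seg m n q h₁ h₂ := x.comp_seg _ _ _ _ _

/-- `Extends Λ y μ x` means `y = μx`: `y(0, d(μ)) = μ` and `σ^{d(μ)}(y) = x`. -/
def Extends (Λ : PGraphStr (Fin k → ℕ) V E) (y : InfPath Λ) (μ : E) (x : InfPath Λ) :
    Prop :=
  y.seg 0 (Λ.d μ) (fun _ => Nat.zero_le _) = μ ∧ y.shift (Λ.d μ) = x

/-- The relation `μ ∼ ν`: `s(μ) = s(ν)` and `μx = νx` for every infinite path `x`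
with range `s(μ)`. -/
def CKeq (Λ : PGraphStr (Fin k → ℕ) V E) (μ ν : E) : Prop :=
  Λ.s μ = Λ.s ν ∧ ∀ x y z : InfPath Λ, x.range = Λ.s μ →
    Extends Λ y μ x → Extends Λ z ν x → y = z

/-- The periodicity set `Per(Λ) = {d(μ) - d(ν) : μ ∼ ν} ⊆ ℤ^k`. -/
def PerSet (Λ : PGraphStr (Fin k → ℕ) V E) : Set (Fin k → ℤ) :=
  {g | ∃ μ ν : E, CKeq Λ μ ν ∧ g = fun i => (Λ.d μ i : ℤ) - (Λ.d ν i : ℤ)}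

/-- A maximal tail in a `k`-graph. -/
def IsMaximalTail (Λ : PGraphStr (Fin k → ℕ) V E) (T : Set V) : Prop :=
  T.Nonempty ∧
  (∀ v₁ ∈ T, ∀ v₂ ∈ T, ∃ w ∈ T,
    (∃ e : E, Λ.r e = v₁ ∧ Λ.s e = w) ∧ ∃ e : E, Λ.r e = v₂ ∧ Λ.s e = w) ∧
  (∀ v ∈ T, ∀ i : Fin k,
    ∃ e : E, Λ.r e = v ∧ Λ.d e = Pi.single i 1 ∧ Λ.s e ∈ T) ∧
  (∀ w ∈ T, ∀ (v : V) (e : E), Λ.r e = v → Λ.s e = w → v ∈ T)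

/-- `Σ_v = {(p,q) : σ^p(x) = σ^q(x) for all x ∈ vΛ^∞}`. -/
def SigmaV (Λ : PGraphStr (Fin k → ℕ) V E) (v : V) :
    Set ((Fin k → ℕ) × (Fin k → ℕ)) :=
  {pq | ∀ x : InfPath Λ, x.range = v → x.shift pq.1 = x.shift pq.2}

/-- `Σ_Λ = ⋃_v Σ_v`. -/
def SigmaL (Λ : PGraphStr (Fin k → ℕ) V E) : Set ((Fin k → ℕ) × (Fin k → ℕ)) :=
  ⋃ v : V, SigmaV Λ v

/-- The hereditary set `H_Per`. -/
def HPer (Λ : PGraphStr (Fin k → ℕ) V E) : Set V :=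
  {v | ∀ lam : E, Λ.r lam = v → ∀ m : Fin k → ℕ,
    (fun i => (Λ.d lam i : ℤ) - (m i : ℤ)) ∈ PerSet Λ →
    ∃ μ : E, Λ.r μ = v ∧ Λ.d μ = m ∧ CKeq Λ lam μ}

/-- The coordinatewise inclusion `ℕ^k →+ ℤ^k`. -/
def intCast (k : ℕ) : (Fin k → ℕ) →+ (Fin k → ℤ) where
  toFun n := fun i => (n i : ℤ)
  map_zero' := by funext i; simp
  map_add' a b := by funext i; simp

/-- The composite `ℕ^k → ℤ^k → ℤ^k/H`. -/
def quotHom (k : ℕ) (H : AddSubgroup (Fin k → ℤ)) :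
    (Fin k → ℕ) →+ (Fin k → ℤ) ⧸ H :=
  (QuotientAddGroup.mk' H).comp (intCast k)

/-- The submonoid `P = f(ℕ^k)` of `ℤ^k/H`. -/
def PMon (k : ℕ) (H : AddSubgroup (Fin k → ℤ)) : AddSubmonoid ((Fin k → ℤ) ⧸ H) :=
  AddMonoidHom.mrange (quotHom k H)

theorem mem_PMon (k : ℕ) (H : AddSubgroup (Fin k → ℤ)) (n : Fin k → ℕ) :
    quotHom k H n ∈ PMon k H :=
  ⟨n, rfl⟩


section Aux
variable {k : ℕ} {V E : Type}

/-- Choice of a factorisation of `ξ` at degree `(p, q)`. -/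
noncomputable def PGraphStr.split (Λ : PGraphStr (Fin k → ℕ) V E)
    (ξ : E) (p q : Fin k → ℕ) (h : Λ.d ξ = p + q) : E × E :=
  (Λ.factor ξ p q h).choose

lemma PGraphStr.split_spec (Λ : PGraphStr (Fin k → ℕ) V E)
    (ξ : E) (p q : Fin k → ℕ) (h : Λ.d ξ = p + q) :
    Λ.s (Λ.split ξ p q h).1 = Λ.r (Λ.split ξ p q h).2 ∧
    Λ.d (Λ.split ξ p q h).1 = p ∧ Λ.d (Λ.split ξ p q h).2 = q ∧
    Λ.comp (Λ.split ξ p q h).1 (Λ.split ξ p q h).2 = ξ :=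
  (Λ.factor ξ p q h).choose_spec.1

lemma PGraphStr.split_eq (Λ : PGraphStr (Fin k → ℕ) V E)
    {ξ : E} {p q : Fin k → ℕ} (h : Λ.d ξ = p + q) {η ζ : E}
    (h1 : Λ.s η = Λ.r ζ) (h2 : Λ.d η = p) (h3 : Λ.d ζ = q) (h4 : Λ.comp η ζ = ξ) :
    η = (Λ.split ξ p q h).1 ∧ ζ = (Λ.split ξ p q h).2 := by
  have e1 := (Λ.factor ξ p q h).choose_spec.2 (η, ζ) ⟨h1, h2, h3, h4⟩
  have e2 := (Λ.factor ξ p q h).choose_spec.2 _ (Λ.split_spec ξ p q h)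
  have := e1.trans e2.symm
  exact ⟨congrArg Prod.fst this, congrArg Prod.snd this⟩

lemma PGraphStr.eq_vert_of_d_zero (Λ : PGraphStr (Fin k → ℕ) V E)
    {ζ : E} (h : Λ.d ζ = 0) : ζ = Λ.vert (Λ.r ζ) := by
  have h0 : Λ.d ζ = 0 + 0 := by simp [h]
  have e1 := Λ.split_eq h0 (Λ.s_vert (Λ.r ζ)) (Λ.d_vert _) h (Λ.vert_comp ζ)
  have e2 := Λ.split_eq h0 (Λ.r_vert (Λ.s ζ)).symm h (Λ.d_vert _) (Λ.comp_vert ζ)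
  exact e2.1.trans e1.1.symm

/-- In a maximal tail, from any vertex of `T` there is a path of any prescribed
degree with source in `T`. -/
lemma exists_deg_path (Λ : PGraphStr (Fin k → ℕ) V E) (T : Set V)
    (hT : IsMaximalTail Λ T) (n : Fin k → ℕ) :
    ∀ v ∈ T, ∃ e : E, Λ.r e = v ∧ Λ.d e = n ∧ Λ.s e ∈ T := by
  suffices H : ∀ N (n : Fin k → ℕ), (∑ i, n i) = N → ∀ v ∈ T,
      ∃ e : E, Λ.r e = v ∧ Λ.d e = n ∧ Λ.s e ∈ T from H _ n rfl
  intro N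
  induction N using Nat.strong_induction_on with
  | _ N ih =>
    intro n hn v hv
    by_cases h0 : n = 0
    · exact ⟨Λ.vert v, Λ.r_vert v, by rw [Λ.d_vert, h0], by rw [Λ.s_vert]; exact hv⟩
    · obtain ⟨i, hi⟩ := Function.ne_iff.mp h0
      obtain ⟨e₁, h1r, h1d, h1s⟩ := hT.2.2.1 v hv i
      have hipos : 1 ≤ n i := Nat.one_le_iff_ne_zero.mpr (by simpa using hi)
      set n' : Fin k → ℕ := n - Pi.single i 1 with hn'
      have hlt : (∑ j, n' j) < N := by
        rw [← hn]
        apply Finset.sum_lt_sum (fun j _ => by simp only [hn', Pi.sub_apply]; exact Nat.sub_le _ _)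
        exact ⟨i, Finset.mem_univ i, by
          simp only [hn', Pi.sub_apply, Pi.single_eq_same]; omega⟩
      obtain ⟨e₂, h2r, h2d, h2s⟩ := ih _ hlt n' rfl (Λ.s e₁) h1s
      have hcomp : Λ.s e₁ = Λ.r e₂ := h2r.symm
      refine ⟨Λ.comp e₁ e₂, (Λ.r_comp _ _ hcomp).trans h1r, ?_, by rw [Λ.s_comp _ _ hcomp]; exact h2s⟩
      rw [Λ.d_comp _ _ hcomp, h1d, h2d]
      funext j
      rcases eq_or_ne j i with rfl | hji
      · simp only [Pi.add_apply, hn', Pi.sub_apply, Pi.single_eq_same]; omega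
      · simp only [Pi.add_apply, hn', Pi.sub_apply, Pi.single_eq_of_ne hji]; omega

end Aux

/-- For any maximal tail `T` of a row-finite `k`-graph with no sources, there is an
infinite path `x` lying in `ΛT` that is cofinal in `T`: for each `v ∈ T` there exists
`n ∈ ℕ^k` with `vΛx(n) ≠ ∅`. -/
theorem stmt19 (k : ℕ) (V E : Type) [Countable E] (Λ : PGraphStr (Fin k → ℕ) V E)
    (hrf : RowFiniteNoSources Λ) (T : Set V) (hT : IsMaximalTail Λ T) :
    ∃ x : InfPath Λ,
      (∀ m n (h : m ≤ n), Λ.r (x.seg m n h) ∈ T ∧ Λ.s (x.seg m n h) ∈ T) ∧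
      ∀ v ∈ T, ∃ (n : Fin k → ℕ) (e : E),
        Λ.r e = v ∧ Λ.s e = Λ.r (x.seg n n le_rfl) := by
  classical
  have hVcount : Countable V := by
    have hinj : Function.Injective Λ.vert := fun a b h => by
      rw [← Λ.r_vert a, h, Λ.r_vert]
    exact hinj.countable
  obtain ⟨t, ht⟩ := (T.to_countable).exists_eq_range hT.1
  have htT : ∀ j, t j ∈ T := fun j => ht ▸ Set.mem_range_self j
  have hclose : ∀ e : E, Λ.s e ∈ T → Λ.r e ∈ T :=
    fun e h => hT.2.2.2 (Λ.s e) h (Λ.r e) e rfl rfl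
  -- the recursive step
  have hstep : ∀ p : {v : V // v ∈ T} × ℕ, ∃ q : {v : V // v ∈ T} × E × E,
      Λ.r q.2.1 = (p.1 : V) ∧ Λ.s q.2.1 = (q.1 : V) ∧ (∀ i, 1 ≤ Λ.d q.2.1 i) ∧
      Λ.r q.2.2 = t p.2 ∧ Λ.s q.2.2 = (q.1 : V) := by
    rintro ⟨⟨v, hv⟩, j⟩
    obtain ⟨w, hw, ⟨e₁, h1r, h1s⟩, e₂, h2r, h2s⟩ := hT.2.1 v hv (t j) (htT j)
    obtain ⟨e₃, h3r, h3d, h3s⟩ := exists_deg_path Λ T hT (fun _ => 1) w hw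
    have c1 : Λ.s e₁ = Λ.r e₃ := h1s.trans h3r.symm
    have c2 : Λ.s e₂ = Λ.r e₃ := h2s.trans h3r.symm
    refine ⟨⟨⟨Λ.s e₃, h3s⟩, Λ.comp e₁ e₃, Λ.comp e₂ e₃⟩,
      (Λ.r_comp _ _ c1).trans h1r, Λ.s_comp _ _ c1, ?_,
      (Λ.r_comp _ _ c2).trans h2r, Λ.s_comp _ _ c2⟩
    intro i
    rw [Λ.d_comp _ _ c1]
    simp only [Pi.add_apply, h3d]
    omega
  choose step hs1 hs2 hs3 hs4 hs5 using hstep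
  -- the chain of vertices and paths
  obtain ⟨u, π, hu0, huS, hπ0, hπS⟩ :
      ∃ (u : ℕ → {v : V // v ∈ T}) (π : ℕ → E),
        u 0 = ⟨t 0, htT 0⟩ ∧ (∀ j, u (j + 1) = (step (u j, j)).1) ∧
        π 0 = Λ.vert (t 0) ∧
        (∀ j, π (j + 1) = Λ.comp (π j) ((step (u j, j)).2.1)) := by
    refine ⟨fun j => Nat.rec (motive := fun _ => {v : V // v ∈ T})
        ⟨t 0, htT 0⟩ (fun j uj => (step (uj, j)).1) j, fun j => Nat.rec (motive := fun _ => E)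
        (Λ.vert (t 0)) (fun j pj => Λ.comp pj ((step
          (Nat.rec (motive := fun _ => {v : V // v ∈ T})
            ⟨t 0, htT 0⟩ (fun i ui => (step (ui, i)).1) j, j)).2.1)) j,
      rfl, fun _ => rfl, rfl, fun _ => rfl⟩
  have hsπ : ∀ j, Λ.s (π j) = (u j : V) := by
    intro j
    induction j with
    | zero => rw [hπ0, hu0]; exact Λ.s_vert _
    | succ j ih =>
      rw [hπS j, Λ.s_comp _ _ (ih.trans (hs1 (u j, j)).symm), hs2 (u j, j), huS j]
  have hcond : ∀ j, Λ.s (π j) = Λ.r ((step (u j, j)).2.1) :=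
    fun j => (hsπ j).trans (hs1 (u j, j)).symm
  have hdS : ∀ j, Λ.d (π (j + 1)) = Λ.d (π j) + Λ.d ((step (u j, j)).2.1) := by
    intro j
    rw [hπS j]
    exact Λ.d_comp _ _ (hcond j)
  have hDj : ∀ j i, j ≤ Λ.d (π j) i := by
    intro j
    induction j with
    | zero => intro i; exact Nat.zero_le _
    | succ j ih =>
      intro i
      rw [hdS j]
      have h1 := hs3 (u j, j) i
      have h2 := ih i
      simp only [Pi.add_apply]
      omega
  have hDmono : ∀ j j', j ≤ j' → Λ.d (π j) ≤ Λ.d (π j') := by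
    intro j j' h
    induction j', h using Nat.le_induction with
    | base => exact le_rfl
    | succ m hm ih =>
      refine le_trans ih ?_
      rw [hdS m]
      exact le_self_add
  have hpf : ∀ j (n : Fin k → ℕ), n ≤ Λ.d (π j) →
      Λ.d (π j) = n + (Λ.d (π j) - n) := by
    intro j n h
    funext i
    have := Pi.le_def.mp h i
    simp only [Pi.add_apply, Pi.sub_apply]
    omega
  -- stability of prefixes
  have hstab : ∀ j j', j ≤ j' → ∀ n, n ≤ Λ.d (π j) →
      ∀ (pf : Λ.d (π j) = n + (Λ.d (π j) - n))
        (pf' : Λ.d (π j') = n + (Λ.d (π j') - n)),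
      (Λ.split (π j') n (Λ.d (π j') - n) pf').1
        = (Λ.split (π j) n (Λ.d (π j) - n) pf).1 := by
    intro j j' hjj'
    induction j', hjj' using Nat.le_induction with
    | base => intro n hn pf pf'; rfl
    | succ m hm ih =>
      intro n hn pf pf'
      have hnm : n ≤ Λ.d (π m) := le_trans hn (hDmono j m hm)
      have pfm : Λ.d (π m) = n + (Λ.d (π m) - n) := hpf m n hnm
      obtain ⟨q1, q2, q3, q4⟩ := Λ.split_spec (π m) n (Λ.d (π m) - n) pfm
      have hsA2 : Λ.s ((Λ.split (π m) n (Λ.d (π m) - n) pfm).2)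
          = Λ.r ((step (u m, m)).2.1) := by
        refine Eq.trans ?_ (hcond m)
        conv_rhs => rw [← q4]
        rw [Λ.s_comp _ _ q1]
      have h1 : Λ.s ((Λ.split (π m) n (Λ.d (π m) - n) pfm).1)
          = Λ.r (Λ.comp ((Λ.split (π m) n (Λ.d (π m) - n) pfm).2)
              ((step (u m, m)).2.1)) := by
        rw [Λ.r_comp _ _ hsA2]
        exact q1
      have h3 : Λ.d (Λ.comp ((Λ.split (π m) n (Λ.d (π m) - n) pfm).2)
          ((step (u m, m)).2.1)) = Λ.d (π (m + 1)) - n := by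
        rw [Λ.d_comp _ _ hsA2, q3]
        funext i
        have e1 := congrFun (hdS m) i
        have e2 := Pi.le_def.mp hnm i
        simp only [Pi.add_apply, Pi.sub_apply] at e1 ⊢
        omega
      have h4 : Λ.comp ((Λ.split (π m) n (Λ.d (π m) - n) pfm).1)
          (Λ.comp ((Λ.split (π m) n (Λ.d (π m) - n) pfm).2)
            ((step (u m, m)).2.1)) = π (m + 1) := by
        rw [← Λ.comp_assoc _ _ _ q1 hsA2, q4, ← hπS m]
      have key := Λ.split_eq pf' h1 q2 h3 h4
      exact key.1.symm.trans (ih n hn pf pfm)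
  have hJ : ∀ n : Fin k → ℕ, n ≤ Λ.d (π (∑ i, n i)) := by
    intro n
    rw [Pi.le_def]
    intro i
    calc n i ≤ ∑ j, n j := Finset.single_le_sum (fun j _ => Nat.zero_le _) (Finset.mem_univ i)
    _ ≤ Λ.d (π (∑ j, n j)) i := hDj _ i
  obtain ⟨P, hP⟩ : ∃ P : (Fin k → ℕ) → E, ∀ n,
      P n = (Λ.split (π (∑ i, n i)) n (Λ.d (π (∑ i, n i)) - n)
        (hpf _ n (hJ n))).1 := ⟨_, fun _ => rfl⟩
  have hPany : ∀ j n (hn : n ≤ Λ.d (π j)) (pf : Λ.d (π j) = n + (Λ.d (π j) - n)),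
      P n = (Λ.split (π j) n (Λ.d (π j) - n) pf).1 := by
    intro j n hn pf
    rcases le_total (∑ i, n i) j with h | h
    · rw [hP n]
      exact (hstab _ _ h n (hJ n) (hpf _ n (hJ n)) pf).symm
    · rw [hP n]
      exact hstab j _ h n hn pf (hpf _ n (hJ n))
  have hPd : ∀ n, Λ.d (P n) = n := by
    intro n
    rw [hP n]
    exact (Λ.split_spec _ n _ (hpf _ n (hJ n))).2.1
  have hPsT : ∀ n, Λ.s (P n) ∈ T := by
    intro n
    obtain ⟨b1, b2, b3, b4⟩ := Λ.split_spec (π (∑ i, n i)) n _ (hpf _ n (hJ n))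
    rw [hP n, b1]
    apply hclose
    have hb : Λ.s ((Λ.split (π (∑ i, n i)) n (Λ.d (π (∑ i, n i)) - n)
        (hpf _ n (hJ n))).2) = Λ.s (π (∑ i, n i)) := by
      conv_rhs => rw [← b4]
      rw [Λ.s_comp _ _ b1]
    rw [hb, hsπ]
    exact (u _).2
  have hq : ∀ (m n : Fin k → ℕ), m ≤ n → Λ.d (P n) = m + (n - m) := by
    intro m n h
    rw [hPd]
    funext i
    have := Pi.le_def.mp h i
    simp only [Pi.add_apply, Pi.sub_apply]
    omega
  have hsplit1 : ∀ m n (hmn : m ≤ n) (pf : Λ.d (P n) = m + (n - m)),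
      (Λ.split (P n) m (n - m) pf).1 = P m := by
    intro m n hmn pf
    obtain ⟨c1, c2, c3, c4⟩ := Λ.split_spec (P n) m (n - m) pf
    have hnj : n ≤ Λ.d (π (∑ i, n i)) := hJ n
    have pfB := hpf (∑ i, n i) n hnj
    obtain ⟨b1, b2, b3, b4⟩ := Λ.split_spec (π (∑ i, n i)) n (Λ.d (π (∑ i, n i)) - n) pfB
    have hsC2 : Λ.s ((Λ.split (P n) m (n - m) pf).2) = Λ.s (P n) := by
      conv_rhs => rw [← c4]
      rw [Λ.s_comp _ _ c1]
    have hsB1 : Λ.s (P n)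
        = Λ.r ((Λ.split (π (∑ i, n i)) n (Λ.d (π (∑ i, n i)) - n) pfB).2) := by
      rw [hP n]
      exact b1
    have hc2b2 := hsC2.trans hsB1
    have hmj : m ≤ Λ.d (π (∑ i, n i)) := le_trans hmn hnj
    have pfm := hpf (∑ i, n i) m hmj
    have h1 : Λ.s ((Λ.split (P n) m (n - m) pf).1)
        = Λ.r (Λ.comp ((Λ.split (P n) m (n - m) pf).2)
            ((Λ.split (π (∑ i, n i)) n (Λ.d (π (∑ i, n i)) - n) pfB).2)) := by
      rw [Λ.r_comp _ _ hc2b2]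
      exact c1
    have h3 : Λ.d (Λ.comp ((Λ.split (P n) m (n - m) pf).2)
        ((Λ.split (π (∑ i, n i)) n (Λ.d (π (∑ i, n i)) - n) pfB).2))
        = Λ.d (π (∑ i, n i)) - m := by
      rw [Λ.d_comp _ _ hc2b2, c3, b3]
      funext i
      have e1 := Pi.le_def.mp hmn i
      have e2 := Pi.le_def.mp hnj i
      simp only [Pi.add_apply, Pi.sub_apply]
      omega
    have h4 : Λ.comp ((Λ.split (P n) m (n - m) pf).1)
        (Λ.comp ((Λ.split (P n) m (n - m) pf).2)
          ((Λ.split (π (∑ i, n i)) n (Λ.d (π (∑ i, n i)) - n) pfB).2))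
        = π (∑ i, n i) := by
      rw [← Λ.comp_assoc _ _ _ c1 hc2b2, c4, hP n, b4]
    have key := Λ.split_eq pfm h1 c2 h3 h4
    rw [key.1]
    exact (hPany _ m hmj pfm).symm
  have hPD : ∀ j, P (Λ.d (π j)) = π j := by
    intro j
    have pf0 := hpf j (Λ.d (π j)) le_rfl
    have h3 : Λ.d (Λ.vert (Λ.s (π j))) = Λ.d (π j) - Λ.d (π j) := by
      rw [Λ.d_vert]
      funext i
      simp only [Pi.sub_apply, Pi.zero_apply]
      omega
    have key := Λ.split_eq pf0 (Λ.r_vert (Λ.s (π j))).symm rfl h3 (Λ.comp_vert (π j))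
    rw [hPany j (Λ.d (π j)) le_rfl pf0, ← key.1]
  have hs_seg : ∀ m n (h : m ≤ n),
      Λ.s ((Λ.split (P n) m (n - m) (hq m n h)).2) = Λ.s (P n) := by
    intro m n h
    conv_rhs => rw [← (Λ.split_spec (P n) m (n - m) (hq m n h)).2.2.2]
    rw [Λ.s_comp _ _ (Λ.split_spec (P n) m (n - m) (hq m n h)).1]
  have hr_seg : ∀ m n (h : m ≤ n),
      Λ.r ((Λ.split (P n) m (n - m) (hq m n h)).2) = Λ.s (P m) := by
    intro m n h
    rw [← (Λ.split_spec (P n) m (n - m) (hq m n h)).1, hsplit1 m n h]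
  refine ⟨⟨fun m n h => (Λ.split (P n) m (n - m) (hq m n h)).2, ?_, ?_, ?_, ?_⟩, ?_, ?_⟩
  · intro m n h
    exact (Λ.split_spec (P n) m (n - m) (hq m n h)).2.2.1
  · intro m n p h₁ h₂
    show Λ.s ((Λ.split (P n) m (n - m) (hq m n h₁)).2)
      = Λ.r ((Λ.split (P p) n (p - n) (hq n p h₂)).2)
    rw [hs_seg m n h₁, hr_seg n p h₂]
  · intro m
    show (Λ.split (P m) m (m - m) (hq m m le_rfl)).2 = _
    apply Λ.eq_vert_of_d_zero
    refine ((Λ.split_spec (P m) m (m - m) (hq m m le_rfl)).2.2.1).trans ?_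
    funext i
    simp only [Pi.sub_apply, Pi.zero_apply]
    omega
  · intro m n p h₁ h₂
    show Λ.comp ((Λ.split (P n) m (n - m) (hq m n h₁)).2)
        ((Λ.split (P p) n (p - n) (hq n p h₂)).2)
      = (Λ.split (P p) m (p - m) (hq m p (h₁.trans h₂))).2
    have sA2 : Λ.s ((Λ.split (P n) m (n - m) (hq m n h₁)).2)
        = Λ.r ((Λ.split (P p) n (p - n) (hq n p h₂)).2) :=
      (hs_seg m n h₁).trans (hr_seg n p h₂).symm
    have h1 : Λ.s (P m) = Λ.r (Λ.comp ((Λ.split (P n) m (n - m) (hq m n h₁)).2)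
        ((Λ.split (P p) n (p - n) (hq n p h₂)).2)) :=
      ((Λ.r_comp _ _ sA2).trans (hr_seg m n h₁)).symm
    have h3 : Λ.d (Λ.comp ((Λ.split (P n) m (n - m) (hq m n h₁)).2)
        ((Λ.split (P p) n (p - n) (hq n p h₂)).2)) = p - m := by
      rw [Λ.d_comp _ _ sA2, (Λ.split_spec (P n) m (n - m) (hq m n h₁)).2.2.1,
        (Λ.split_spec (P p) n (p - n) (hq n p h₂)).2.2.1]
      funext i
      have e1 := Pi.le_def.mp h₁ i
      have e2 := Pi.le_def.mp h₂ i
      simp only [Pi.add_apply, Pi.sub_apply]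
      omega
    have h4 : Λ.comp (P m) (Λ.comp ((Λ.split (P n) m (n - m) (hq m n h₁)).2)
        ((Λ.split (P p) n (p - n) (hq n p h₂)).2)) = P p := by
      rw [← Λ.comp_assoc _ _ _ ((hr_seg m n h₁).symm) sA2,
        ← hsplit1 m n h₁ (hq m n h₁), (Λ.split_spec (P n) m (n - m) (hq m n h₁)).2.2.2,
        ← hsplit1 n p h₂ (hq n p h₂), (Λ.split_spec (P p) n (p - n) (hq n p h₂)).2.2.2]
    exact (Λ.split_eq (hq m p (h₁.trans h₂)) h1 (hPd m) h3 h4).2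
  · intro m n h
    show Λ.r ((Λ.split (P n) m (n - m) (hq m n h)).2) ∈ T
      ∧ Λ.s ((Λ.split (P n) m (n - m) (hq m n h)).2) ∈ T
    constructor
    · rw [hr_seg m n h]
      exact hPsT m
    · rw [hs_seg m n h]
      exact hPsT n
  · intro v hv
    obtain ⟨j, hj⟩ : v ∈ Set.range t := ht ▸ hv
    refine ⟨Λ.d (π (j + 1)), (step (u j, j)).2.2, ?_, ?_⟩
    · rw [hs4 (u j, j)]
      exact hj
    · show Λ.s ((step (u j, j)).2.2)
        = Λ.r ((Λ.split (P (Λ.d (π (j + 1)))) (Λ.d (π (j + 1)))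
            (Λ.d (π (j + 1)) - Λ.d (π (j + 1)))
            (hq (Λ.d (π (j + 1))) (Λ.d (π (j + 1))) le_rfl)).2)
      rw [hs5 (u j, j), hr_seg _ _ le_rfl, hPD (j + 1), hsπ (j + 1), huS j]
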